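/- arXiv:cond-mat/9904230 — 3 statements merged into one kernel-verified Lean document; each statement's English description precedes it below -/
import Mathlib

section
/- The one-sided Thue-Morse sequence is not eventually periodic: there is no p > 0 and N such that t(n + p) = t(n) for all n ≥ N. -/
open Fin.NatCast in
/-- The Thue-Morse sequence: parity of the number of 1's in the binary expansion. -/
def thueMorse (n : ℕ) : Fin 2 := (((Nat.digits 2 n).count 1 : ℕ) : Fin 2)

/-!
The recurrences `t (2n) = t n` and `t (2n+1) = t n + 1` do all the work. An even eventual
period `2q` of `t` gives the eventual period `q` by reading it off at even arguments, so we may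
assume the period `2r+1` is odd. Reading it off at `2n` and at `2n+1` gives
`t (n+r) = t n + 1 = t (n+r+1)` for large `n`, so `t` is eventually constant, which contradicts
`t (2n+1) ≠ t (2n)`.
-/

theorem Fin.add_one_add_one_eq_self (a : Fin 2) : a + 1 + 1 = a := by
  rw [add_assoc, show (1 + 1 : Fin 2) = 0 from rfl, add_zero]

def HasEventualPeriod {α : Type*} (f : ℕ → α) (p : ℕ) : Prop :=
  ∃ N, ∀ n ≥ N, f (n + p) = f n

theorem thueMorse_two_mul (n : ℕ) : thueMorse (2 * n) = thueMorse n := by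
  rcases Nat.eq_zero_or_pos n with rfl | hn
  · rfl
  · simp [thueMorse, Nat.digits_base_mul one_lt_two hn]

open Fin.NatCast in
theorem thueMorse_two_mul_add_one (n : ℕ) : thueMorse (2 * n + 1) = thueMorse n + 1 := by
  have h := Nat.digits_add 2 one_lt_two 1 n one_lt_two (Or.inl one_ne_zero)
  rw [add_comm] at h
  rw [thueMorse, thueMorse, h, List.count_cons_self, Nat.cast_add_one]

theorem thueMorse_two_mul_add_one_ne (n : ℕ) : thueMorse (2 * n + 1) ≠ thueMorse (2 * n) := by
  simp [thueMorse_two_mul_add_one, thueMorse_two_mul]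

theorem thueMorse_hasEventualPeriod_of_two_mul {q : ℕ}
    (h : HasEventualPeriod thueMorse (2 * q)) : HasEventualPeriod thueMorse q := by
  obtain ⟨N, hN⟩ := h
  refine ⟨N, fun n hn => ?_⟩
  simpa only [← mul_add, thueMorse_two_mul] using hN (2 * n) (by omega)

theorem thueMorse_hasEventualPeriod_of_two_pow_mul {k m : ℕ}
    (h : HasEventualPeriod thueMorse (2 ^ k * m)) : HasEventualPeriod thueMorse m := by
  induction k with
  | zero => simpa using h
  | succ k ih =>
    rw [pow_succ', mul_assoc] at h
    exact ih (thueMorse_hasEventualPeriod_of_two_mul h)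

theorem thueMorse_hasEventualPeriod_one_of_odd {p : ℕ} (hp : Odd p)
    (h : HasEventualPeriod thueMorse p) : HasEventualPeriod thueMorse 1 := by
  obtain ⟨r, rfl⟩ := hp
  obtain ⟨N, hN⟩ := h
  have h_even : ∀ n ≥ N, thueMorse (n + r) + 1 = thueMorse n := fun n hn => by
    have := hN (2 * n) (by omega)
    rwa [show 2 * n + (2 * r + 1) = 2 * (n + r) + 1 by ring, thueMorse_two_mul_add_one,
      thueMorse_two_mul] at this
  have h_odd : ∀ n ≥ N, thueMorse (n + 1 + r) = thueMorse n + 1 := fun n hn => by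
    have := hN (2 * n + 1) (by omega)
    rwa [show 2 * n + 1 + (2 * r + 1) = 2 * (n + 1 + r) by ring, thueMorse_two_mul,
      thueMorse_two_mul_add_one] at this
  refine ⟨N, fun n hn => ?_⟩
  rw [← h_even (n + 1) (by omega), h_odd n hn, Fin.add_one_add_one_eq_self]

theorem thueMorse_not_hasEventualPeriod_one : ¬ HasEventualPeriod thueMorse 1 := by
  rintro ⟨N, hN⟩
  exact thueMorse_two_mul_add_one_ne N (hN (2 * N) (by omega))

theorem thueMorse_not_eventually_periodic :
    ¬ ∃ p : ℕ, 0 < p ∧ ∃ N : ℕ, ∀ n ≥ N, thueMorse (n + p) = thueMorse n := by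
  rintro ⟨p, hp, hper⟩
  obtain ⟨k, m, hm, rfl⟩ := Nat.exists_eq_two_pow_mul_odd hp.ne'
  exact thueMorse_not_hasEventualPeriod_one <| thueMorse_hasEventualPeriod_one_of_odd hm <|
    thueMorse_hasEventualPeriod_of_two_pow_mul hper
end

section
/- The Thue-Morse sequence contains no three consecutive identical symbols: there is no n with t(n) = t(n+1) = t(n+2). -/
theorem thueMorse_two_mul_ne_two_mul_add_one (n : ℕ) :
    thueMorse (2 * n) ≠ thueMorse (2 * n + 1) := by
  rw [thueMorse_two_mul, thueMorse_two_mul_add_one]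
  simp

theorem thueMorse_no_cube :
    ¬ ∃ n : ℕ, thueMorse n = thueMorse (n + 1) ∧ thueMorse (n + 1) = thueMorse (n + 2) := by
  rintro ⟨n, h01, h12⟩
  obtain ⟨k, rfl | rfl⟩ := Nat.even_or_odd' n
  · exact thueMorse_two_mul_ne_two_mul_add_one k h01
  · exact thueMorse_two_mul_ne_two_mul_add_one (k + 1) h12
end

section
/- Every integer n ∈ ℤ can be written as Σ_{k ∈ A} (−1)^{k+1} 2^k for a unique finite subset A ⊆ ℕ. -/
/-! Since `(-1)^(k+1) 2^k = -(-2)^k`, this is base `-2` with digits `0, 1`. Both halves rest on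
the digit recursion `∑_{k ∈ A} (-2)^k = [0 ∈ A] - 2 ∑_{k+1 ∈ A} (-2)^k`: the parity of the value
determines the digit `0 ∈ A`, which gives uniqueness digit by digit, and peeling off that digit
(`n ↦ -⌊n/2⌋`) gives existence by strong induction on `|4n - 1|` (not `|n|`, as `-1 ↦ 1`). -/

lemma Finset.sum_eq_ite_zero_add_sum_preimage_succ {M : Type*} [AddCommMonoid M] (A : Finset ℕ)
    (g : ℕ → M) :
    ∑ k ∈ A, g k = (if 0 ∈ A then g 0 else 0) +
      ∑ k ∈ A.preimage Nat.succ Nat.succ_injective.injOn, g (k + 1) := by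
  classical
  rw [← sum_filter_add_sum_filter_not A (· = 0), sum_preimage', Nat.range_succ]
  congr 1
  · rw [sum_filter, sum_ite_eq']
  · exact sum_congr (by ext; simp [Nat.pos_iff_ne_zero]) fun _ _ ↦ rfl

namespace Negabinary

open Finset

def value (A : Finset ℕ) : ℤ := ∑ k ∈ A, (-2) ^ k

noncomputable def tail (A : Finset ℕ) : Finset ℕ := A.preimage Nat.succ Nat.succ_injective.injOn

lemma succ_mem_iff_mem_tail {A : Finset ℕ} {k : ℕ} : k + 1 ∈ A ↔ k ∈ tail A := by
  simp [tail]

lemma value_eq_ite_add_neg_two_mul (A : Finset ℕ) :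
    value A = (if 0 ∈ A then 1 else 0) + -2 * value (tail A) := by
  simp only [value, tail, sum_eq_ite_zero_add_sum_preimage_succ A, pow_zero, mul_sum, pow_succ,
    mul_comm]

lemma value_map_succ (B : Finset ℕ) :
    value (B.map ⟨Nat.succ, Nat.succ_injective⟩) = -2 * value B := by
  simp only [value, sum_map, mul_sum, Function.Embedding.coeFn_mk, pow_succ, mul_comm]

lemma zero_mem_iff_and_value_tail_eq_of_value_eq {A B : Finset ℕ} (h : value A = value B) :
    (0 ∈ A ↔ 0 ∈ B) ∧ value (tail A) = value (tail B) := by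
  rw [value_eq_ite_add_neg_two_mul A, value_eq_ite_add_neg_two_mul B] at h
  split_ifs at h with hA hB hB
  · exact ⟨iff_of_true hA hB, by omega⟩
  · omega
  · omega
  · exact ⟨iff_of_false hA hB, by omega⟩

theorem value_injective : Function.Injective value := by
  intro A B h
  ext k
  induction k generalizing A B with
  | zero => exact (zero_mem_iff_and_value_tail_eq_of_value_eq h).1
  | succ k ih =>
    simpa only [succ_mem_iff_mem_tail] using ih (zero_mem_iff_and_value_tail_eq_of_value_eq h).2

theorem exists_value_eq (n : ℤ) : ∃ A, value A = n := by
  induction h : (4 * n - 1).natAbs using Nat.strong_induction_on generalizing n with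
  | _ N ih =>
  rcases eq_or_ne n 0 with rfl | hn
  · exact ⟨∅, sum_empty⟩
  obtain ⟨B, hB⟩ := ih _ (by omega) (-(n / 2)) rfl
  set S := B.map ⟨Nat.succ, Nat.succ_injective⟩
  have hS : value S = -2 * -(n / 2) := by rw [value_map_succ, hB]
  refine ⟨if n % 2 = 1 then insert 0 S else S, ?_⟩
  split_ifs
  · rw [value, sum_insert (by simp [S]), ← value, hS]
    omega
  · omega

end Negabinary

/-- Every integer has a unique representation as a sum of distinct terms
(−1)^{k+1} 2^k, i.e. of distinct elements of {−1, 2, −4, 8, −16, ...}. -/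
theorem alternating_base_representation :
    ∀ n : ℤ, ∃! A : Finset ℕ, n = ∑ k ∈ A, (-1 : ℤ) ^ (k + 1) * 2 ^ k := by
  have hsum (A : Finset ℕ) : ∑ k ∈ A, (-1 : ℤ) ^ (k + 1) * 2 ^ k = -Negabinary.value A := by
    rw [Negabinary.value, ← Finset.sum_neg_distrib]
    exact Finset.sum_congr rfl fun k _ ↦ by rw [neg_pow (2 : ℤ), pow_succ]; ring
  simp_rw [hsum]
  intro n
  obtain ⟨A, hA⟩ := Negabinary.exists_value_eq (-n)
  exact ⟨A, by omega, fun B hB ↦ Negabinary.value_injective (by omega)⟩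
end
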